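/- Let C ∈ ℝ_max^{n×n}, U, V ∈ ℝ_max^{m×n}, b, d ∈ ℝ_max^m, p ∈ ℝ_max^n, q ∈ (ℝ ∪ {+∞})^n and λ ∈ ℝ. Define the (m+2n+1) × (n+1) matrices A and B(λ) over ℝ_max in block form: A has rows 1..m equal to [U, b], rows m+1..m+n equal to [C, −∞], rows m+n+1..m+2n equal to [−∞, p] (row m+n+i having entry p_i in the last column and −∞ elsewhere), and last row [q^-, −∞] (entry −q_j in column j when q_j ∈ ℝ, −∞ otherwise); B(λ) has rows 1..m equal to [V, d], rows m+1..m+n and rows m+n+1..m+2n each equal to [λ ⊗ I, −∞], and last row with entry λ in the last column and −∞ elsewhere. Then the following are equivalent: (i) there exists x ∈ ℝ^n with max_j (c_{ij} + x_j) ≤ λ + x_i for all i, p_i ≤ λ + x_i for all i, x_i ≤ λ + q_i for all i with q_i ∈ ℝ, and max( max_j(u_{ij}+x_j), b_i ) ≤ max( max_j(v_{ij}+x_j), d_i ) for all i; (ii) there exists z ∈ ℝ^{n+1} with A ⊗ z ≤ B(λ) ⊗ z. -/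

import Mathlib

/-!
Adding a real constant to every entry of `z` adds it to both sides of `A ⊗ z ≤ B(λ) ⊗ z`, so a
solution may be normalised to `z = (x, 0)`. For such `z` the four row blocks of the system are
exactly the four constraints on `x`; for the last row, `-q_j + x_j ≤ λ` says `x_j ≤ λ + q_j` when
`q_j < +∞` and holds trivially when `q_j = +∞`, since then `-q_j = -∞`.
-/

namespace EReal

noncomputable def addCoeOrderIso (t : ℝ) : EReal ≃o EReal where
  toFun x := x + t
  invFun x := x - t
  left_inv _ := add_sub_cancel_right
  right_inv _ := sub_add_cancel
  map_rel_iff' := (addLECancellable_coe t).add_le_add_iff_right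

theorem iSup_add_coe {ι : Sort*} (f : ι → EReal) (t : ℝ) :
    (⨆ i, f i) + t = ⨆ i, f i + t :=
  (addCoeOrderIso t).map_iSup f

theorem iSup_ite_eq_bot_add {ι : Type*} [DecidableEq ι] (i : ι) (a : EReal) (z : ι → EReal) :
    (⨆ j, (if i = j then a else ⊥) + z j) = a + z i := by
  refine le_antisymm (iSup_le fun j => ?_) ?_
  · by_cases h : i = j
    · subst h; simp
    · simp [h]
  · simpa using le_iSup (fun j => (if i = j then a else ⊥) + z j) i

theorem neg_add_coe_le_coe_iff (q : EReal) (x t : ℝ) :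
    -q + x ≤ t ↔ (q ≠ ⊤ → (x : EReal) ≤ t + q) := by
  induction q using EReal.rec with
  | bot => simp
  | top => simp
  | coe r =>
    norm_cast
    simp only [coe_ne_top, not_false_eq_true, forall_const]
    constructor <;> intro h <;> linarith

end EReal

/-- The max-plus product `M ⊗ z`. -/
noncomputable def maxPlusMulVec {ι κ : Type*} (M : ι → κ → EReal) (z : κ → ℝ) (i : ι) : EReal :=
  ⨆ j, M i j + (z j : EReal)

section MaxPlus

variable {ι κ : Type*}

theorem maxPlusMulVec_add_const (M : ι → κ → EReal) (z : κ → ℝ) (t : ℝ) (i : ι) :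
    maxPlusMulVec M (fun j => z j + t) i = maxPlusMulVec M z i + t := by
  simp only [maxPlusMulVec, EReal.coe_add, ← add_assoc, EReal.iSup_add_coe]

theorem maxPlusMulVec_add_const_le_iff (A B : ι → κ → EReal) (z : κ → ℝ) (t : ℝ) (i : ι) :
    maxPlusMulVec A (fun j => z j + t) i ≤ maxPlusMulVec B (fun j => z j + t) i ↔
      maxPlusMulVec A z i ≤ maxPlusMulVec B z i := by
  rw [maxPlusMulVec_add_const, maxPlusMulVec_add_const]
  exact (EReal.addCoeOrderIso t).le_iff_le

theorem exists_maxPlusMulVec_le_iff_exists_sumElim_zero (A B : ι → κ ⊕ Unit → EReal) :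
    (∃ z : κ ⊕ Unit → ℝ, ∀ i, maxPlusMulVec A z i ≤ maxPlusMulVec B z i) ↔
      ∃ x : κ → ℝ, ∀ i, maxPlusMulVec A (Sum.elim x fun _ => 0) i ≤
        maxPlusMulVec B (Sum.elim x fun _ => 0) i := by
  refine ⟨fun ⟨z, hz⟩ => ⟨fun j => z (.inl j) - z (.inr ()), fun i => ?_⟩, fun ⟨x, hx⟩ => ⟨_, hx⟩⟩
  have hshift : (fun j => z j + -z (.inr ())) =
      Sum.elim (fun j => z (.inl j) - z (.inr ())) fun _ => 0 := by
    ext (j | _) <;> simp [sub_eq_add_neg]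
  rw [← hshift, maxPlusMulVec_add_const_le_iff]
  exact hz i

end MaxPlus

section Pseudoquadratic

variable {m n : ℕ}

noncomputable def pseudoquadraticA (C : Fin n → Fin n → EReal) (U : Fin m → Fin n → EReal)
    (b : Fin m → EReal) (p q : Fin n → EReal) :
    Fin m ⊕ Fin n ⊕ Fin n ⊕ Unit → Fin n ⊕ Unit → EReal :=
  Sum.elim (fun i => Sum.elim (U i) fun _ => b i) <|
    Sum.elim (fun i => Sum.elim (C i) fun _ => ⊥) <|
      Sum.elim (fun i => Sum.elim (fun _ => ⊥) fun _ => p i) fun _ =>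
        Sum.elim (fun j => -q j) fun _ => ⊥

/-- Row `i` of `λ ⊗ I`: off the diagonal it is `⊥ = -∞`, not the `0` of `Matrix.diagonal`. -/
noncomputable def tropicalScalarRow (lam : ℝ) (i j : Fin n) : EReal :=
  if i = j then (lam : EReal) else ⊥

noncomputable def pseudoquadraticB (V : Fin m → Fin n → EReal) (d : Fin m → EReal) (lam : ℝ) :
    Fin m ⊕ Fin n ⊕ Fin n ⊕ Unit → Fin n ⊕ Unit → EReal :=
  Sum.elim (fun i => Sum.elim (V i) fun _ => d i) <|
    Sum.elim (fun i => Sum.elim (tropicalScalarRow lam i) fun _ => ⊥) <|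
      Sum.elim (fun i => Sum.elim (tropicalScalarRow lam i) fun _ => ⊥) fun _ =>
        Sum.elim (fun _ => ⊥) fun _ => (lam : EReal)

theorem pseudoquadratic_system_iff (C : Fin n → Fin n → EReal) (U V : Fin m → Fin n → EReal)
    (b d : Fin m → EReal) (p q : Fin n → EReal) (lam : ℝ) (x : Fin n → ℝ) :
    (∀ i, maxPlusMulVec (pseudoquadraticA C U b p q) (Sum.elim x fun _ => 0) i ≤
        maxPlusMulVec (pseudoquadraticB V d lam) (Sum.elim x fun _ => 0) i) ↔
      (∀ i, (⨆ j, C i j + (x j : EReal)) ≤ (lam : EReal) + (x i : EReal)) ∧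
      (∀ i, p i ≤ (lam : EReal) + (x i : EReal)) ∧
      (∀ i, q i ≠ ⊤ → (x i : EReal) ≤ (lam : EReal) + q i) ∧
      (∀ i, ((⨆ j, U i j + (x j : EReal)) ⊔ b i) ≤ ((⨆ j, V i j + (x j : EReal)) ⊔ d i)) := by
  simp only [Sum.forall, maxPlusMulVec, iSup_sum, iSup_unique, pseudoquadraticA, pseudoquadraticB,
    tropicalScalarRow, Sum.elim_inl, Sum.elim_inr, EReal.coe_zero, add_zero, EReal.bot_add,
    iSup_bot, sup_bot_eq, bot_sup_eq, EReal.iSup_ite_eq_bot_add, iSup_le_iff,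
    EReal.neg_add_coe_le_coe_iff, forall_const]
  tauto

end Pseudoquadratic

theorem stmt19 (m n : ℕ) (C : Fin n → Fin n → EReal)
    (U V : Fin m → Fin n → EReal) (b d : Fin m → EReal)
    (p q : Fin n → EReal) (lam : ℝ)
    (A B : (Fin m ⊕ Fin n ⊕ Fin n ⊕ Unit) → (Fin n ⊕ Unit) → EReal)
    (hA : A = fun i j =>
      match i, j with
      | Sum.inl i, Sum.inl j => U i j
      | Sum.inl i, Sum.inr _ => b i
      | Sum.inr (Sum.inl i), Sum.inl j => C i j
      | Sum.inr (Sum.inl _), Sum.inr _ => ⊥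
      | Sum.inr (Sum.inr (Sum.inl _)), Sum.inl _ => ⊥
      | Sum.inr (Sum.inr (Sum.inl i)), Sum.inr _ => p i
      | Sum.inr (Sum.inr (Sum.inr _)), Sum.inl j => -(q j)
      | Sum.inr (Sum.inr (Sum.inr _)), Sum.inr _ => ⊥)
    (hB : B = fun i j =>
      match i, j with
      | Sum.inl i, Sum.inl j => V i j
      | Sum.inl i, Sum.inr _ => d i
      | Sum.inr (Sum.inl i), Sum.inl j => if i = j then (lam : EReal) else ⊥
      | Sum.inr (Sum.inl _), Sum.inr _ => ⊥
      | Sum.inr (Sum.inr (Sum.inl i)), Sum.inl j => if i = j then (lam : EReal) else ⊥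
      | Sum.inr (Sum.inr (Sum.inl _)), Sum.inr _ => ⊥
      | Sum.inr (Sum.inr (Sum.inr _)), Sum.inl _ => ⊥
      | Sum.inr (Sum.inr (Sum.inr _)), Sum.inr _ => (lam : EReal)) :
    (∃ x : Fin n → ℝ,
        (∀ i, (⨆ j, C i j + (x j : EReal)) ≤ (lam : EReal) + (x i : EReal)) ∧
        (∀ i, p i ≤ (lam : EReal) + (x i : EReal)) ∧
        (∀ i, q i ≠ ⊤ → (x i : EReal) ≤ (lam : EReal) + q i) ∧
        (∀ i, ((⨆ j, U i j + (x j : EReal)) ⊔ b i) ≤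
              ((⨆ j, V i j + (x j : EReal)) ⊔ d i))) ↔
    (∃ z : (Fin n ⊕ Unit) → ℝ,
        ∀ i, (⨆ j, A i j + (z j : EReal)) ≤ ⨆ j, B i j + (z j : EReal)) := by
  obtain rfl : A = pseudoquadraticA C U b p q := by
    subst hA; ext (_ | _ | _ | _) (_ | _) <;> rfl
  obtain rfl : B = pseudoquadraticB V d lam := by
    subst hB; ext (_ | _ | _ | _) (_ | _) <;> rfl
  exact (exists_congr fun x => (pseudoquadratic_system_iff C U V b d p q lam x).symm).trans
    (exists_maxPlusMulVec_le_iff_exists_sumElim_zero _ _).symm
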